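/- arXiv:0805.3320 — 4 statements merged into one kernel-verified Lean document; each statement's English description precedes it below -/
import Mathlib

section
/- Let X be a nondegenerate indecomposable continuum. Then each composant of X is a proper subset of X which is of first category (meager) in X. -/
def IsSubcontinuum {E : Type*} [MetricSpace E] (X A : Set E) : Prop :=
  A ⊆ X ∧ IsCompact A ∧ IsConnected A

def IsIndecomposable {E : Type*} [MetricSpace E] (X : Set E) : Prop :=
  ¬ ∃ A B : Set E, IsSubcontinuum X A ∧ IsSubcontinuum X B ∧ A ≠ X ∧ B ≠ X ∧ A ∪ B = X

def Composant {E : Type*} [MetricSpace E] (X : Set E) (p : E) : Set E :=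
  ⋃₀ {A : Set E | IsSubcontinuum X A ∧ A ≠ X ∧ p ∈ A}

/-!
A proper subcontinuum `A` of an indecomposable continuum `X` is nowhere dense. Indeed, if disjoint
open sets `u`, `v` split `X \ A`, then `A ∪ (X \ A) ∩ u` and `A ∪ (X \ A) ∩ v` are proper
subcontinua covering `X`; so `X \ A` is connected, its closure is a subcontinuum which together
with `A` covers `X`, and indecomposability forces `closure (X \ A) = X`.

Fix a countable basis of `X`. A proper subcontinuum through `p` misses some basic open set `U`, and
the closure of the union of all subcontinua through `p` missing `U` is again a subcontinuum missing
`U`, hence nowhere dense. So the composant of `p` is meagre, and by the Baire category theorem it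
is not all of `X`.
-/

open Set Topology TopologicalSpace

theorem IsPreconnected.union_diff_inter {α : Type*} [TopologicalSpace α] {X A u v : Set α}
    (hX : IsPreconnected X) (hA : IsPreconnected A) (hAX : A ⊆ X) (hu : IsOpen u)
    (hv : IsOpen v) (hcover : X \ A ⊆ u ∪ v) (hdisj : X \ A ∩ (u ∩ v) = ∅) :
    IsPreconnected (A ∪ (X \ A) ∩ u) := by
  intro s t hs ht hKst ⟨y, hyK, hys⟩ ⟨z, hzK, hzt⟩
  wlog hAs : A ⊆ s generalizing s t y z
  · by_cases hAs' : (A ∩ s).Nonempty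
    · obtain ⟨a, haA, hat⟩ := not_subset.mp hAs
      have hAt : (A ∩ t).Nonempty := ⟨a, haA, (hKst (Or.inl haA)).resolve_left hat⟩
      obtain ⟨b, hbA, hbst⟩ := hA s t hs ht (subset_union_left.trans hKst) hAs' hAt
      exact ⟨b, Or.inl hbA, hbst⟩
    · have hAt : A ⊆ t := fun a ha => (hKst (Or.inl ha)).resolve_left fun has => hAs' ⟨a, ha, has⟩
      simpa only [inter_comm s t] using
        this t s ht hs (union_comm s t ▸ hKst) z hzK hzt y hyK hys hAt
  obtain hzA | ⟨hzXA, hzu⟩ := hzK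
  · exact ⟨z, Or.inl hzA, hAs hzA, hzt⟩
  have hyX : y ∈ X := hyK.elim (@hAX y) fun hy => hy.1.1
  have hXcover : X ⊆ (s ∪ v) ∪ (t ∩ u) := by
    intro x hxX
    by_cases hxA : x ∈ A
    · exact Or.inl (Or.inl (hAs hxA))
    rcases hcover ⟨hxX, hxA⟩ with hxu | hxv
    · rcases hKst (Or.inr ⟨⟨hxX, hxA⟩, hxu⟩) with hxs | hxt
      · exact Or.inl (Or.inl hxs)
      · exact Or.inr ⟨hxt, hxu⟩
    · exact Or.inl (Or.inr hxv)
  obtain ⟨x, hxX, hxsv, hxt, hxu⟩ := hX (s ∪ v) (t ∩ u) (hs.union hv) (ht.inter hu) hXcover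
    ⟨y, hyX, Or.inl hys⟩ ⟨z, hzXA.1, hzt, hzu⟩
  by_cases hxA : x ∈ A
  · exact ⟨x, Or.inl hxA, hAs hxA, hxt⟩
  have hxv : x ∉ v := fun hxv => (eq_empty_iff_forall_notMem.mp hdisj) x ⟨⟨hxX, hxA⟩, hxu, hxv⟩
  exact ⟨x, Or.inr ⟨⟨hxX, hxA⟩, hxu⟩, hxsv.resolve_right hxv, hxt⟩

theorem union_diff_inter_eq {α : Type*} {X A u v : Set α} (hAX : A ⊆ X) (hcover : X \ A ⊆ u ∪ v)
    (hdisj : X \ A ∩ (u ∩ v) = ∅) : A ∪ (X \ A) ∩ u = X ∩ (A ∪ vᶜ) := by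
  ext x
  have := @hcover x
  have := eq_empty_iff_forall_notMem.mp hdisj x
  have := @hAX x
  simp only [mem_union, mem_inter_iff, mem_sdiff, mem_compl_iff] at *
  tauto

section Continuum

variable {E : Type*} [MetricSpace E] {X A B : Set E}

theorem IsIndecomposable.eq_of_union_eq (hX : IsIndecomposable X) (hA : IsSubcontinuum X A)
    (hB : IsSubcontinuum X B) (hAB : A ∪ B = X) (hAX : A ≠ X) : B = X :=
  by_contra fun hBX => hX ⟨A, B, hA, hB, hAX, hBX, hAB⟩

theorem isSubcontinuum_closure_sUnion {𝒜 : Set (Set E)} {p : E} (hXc : IsCompact X)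
    (h𝒜 : 𝒜.Nonempty) (hsub : ∀ A ∈ 𝒜, IsSubcontinuum X A) (hp : ∀ A ∈ 𝒜, p ∈ A) :
    IsSubcontinuum X (closure (⋃₀ 𝒜)) := by
  have hX : closure (⋃₀ 𝒜) ⊆ X := closure_minimal (sUnion_subset fun A hA => (hsub A hA).1)
    hXc.isClosed
  obtain ⟨A, hA⟩ := h𝒜
  exact ⟨hX, hXc.of_isClosed_subset isClosed_closure hX,
    ⟨⟨p, subset_closure ⟨A, hA, hp A hA⟩⟩, (isPreconnected_sUnion p 𝒜 hp
      fun A hA => (hsub A hA).2.2.isPreconnected).closure⟩⟩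

theorem isSubcontinuum_union_diff_inter {u v : Set E} (hXc : IsCompact X)
    (hXconn : IsConnected X) (hA : IsSubcontinuum X A) (hu : IsOpen u) (hv : IsOpen v)
    (hcover : X \ A ⊆ u ∪ v) (hdisj : X \ A ∩ (u ∩ v) = ∅) :
    IsSubcontinuum X (A ∪ (X \ A) ∩ u) := by
  obtain ⟨hAX, hAc, hAconn⟩ := hA
  have hsub : A ∪ (X \ A) ∩ u ⊆ X := union_subset hAX fun x hx => hx.1.1
  have hclosed : IsClosed (A ∪ (X \ A) ∩ u) := by
    rw [union_diff_inter_eq hAX hcover hdisj]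
    exact hXc.isClosed.inter (hAc.isClosed.union hv.isClosed_compl)
  exact ⟨hsub, hXc.of_isClosed_subset hclosed hsub, hAconn.nonempty.mono subset_union_left,
    hXconn.isPreconnected.union_diff_inter hAconn.isPreconnected hAX hu hv hcover hdisj⟩

variable (hXc : IsCompact X) (hXconn : IsConnected X) (hX : IsIndecomposable X)
include hXc hXconn hX

theorem IsIndecomposable.isPreconnected_diff (hA : IsSubcontinuum X A) :
    IsPreconnected (X \ A) := by
  rintro u v hu hv hcover ⟨x, hxXA, hxu⟩ ⟨y, hyXA, hyv⟩
  by_contra hempty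
  rw [not_nonempty_iff_eq_empty] at hempty
  have hAu := isSubcontinuum_union_diff_inter hXc hXconn hA hu hv hcover hempty
  have hAv := isSubcontinuum_union_diff_inter hXc hXconn hA hv hu
    (union_comm u v ▸ hcover) (inter_comm u v ▸ hempty)
  have hunion : (A ∪ (X \ A) ∩ u) ∪ (A ∪ (X \ A) ∩ v) = X := by
    refine (union_subset hAu.1 hAv.1).antisymm fun z hzX => ?_
    by_cases hzA : z ∈ A
    · exact Or.inl (Or.inl hzA)
    · exact (hcover ⟨hzX, hzA⟩).imp (fun h => Or.inr ⟨⟨hzX, hzA⟩, h⟩)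
        (fun h => Or.inr ⟨⟨hzX, hzA⟩, h⟩)
  have hnotMem {w w' : Set E} {z : E} (hzXA : z ∈ X \ A) (hzw : z ∈ w)
      (hdisj : X \ A ∩ (w ∩ w') = ∅) : z ∉ A ∪ (X \ A) ∩ w' :=
    fun hz => hz.elim hzXA.2 fun hz' => (eq_empty_iff_forall_notMem.mp hdisj) z ⟨hzXA, hzw, hz'.2⟩
  have hAuX : A ∪ (X \ A) ∩ u ≠ X := fun h =>
    hnotMem hyXA hyv (inter_comm u v ▸ hempty) (h.ge hyXA.1)
  exact hnotMem hxXA hxu hempty ((hX.eq_of_union_eq hAu hAv hunion hAuX).ge hxXA.1)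

theorem IsIndecomposable.subset_closure_diff (hA : IsSubcontinuum X A) (hAX : A ≠ X) :
    X ⊆ closure (X \ A) := by
  have hCX : closure (X \ A) ⊆ X := closure_minimal sdiff_subset hXc.isClosed
  have hXA : (X \ A).Nonempty := sdiff_nonempty.mpr fun h => hAX (hA.1.antisymm h)
  have hC : IsSubcontinuum X (closure (X \ A)) :=
    ⟨hCX, hXc.of_isClosed_subset isClosed_closure hCX, hXA.mono subset_closure,
      (hX.isPreconnected_diff hXc hXconn hA).closure⟩
  have hunion : A ∪ closure (X \ A) = X :=
    (union_subset hA.1 hCX).antisymm fun x hx => by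
      by_cases hxA : x ∈ A
      exacts [Or.inl hxA, Or.inr (subset_closure ⟨hx, hxA⟩)]
  exact (hX.eq_of_union_eq hA hC hunion hAX).ge

theorem IsIndecomposable.isNowhereDense_preimage_val (hA : IsSubcontinuum X A) (hAX : A ≠ X) :
    IsNowhereDense (Subtype.val ⁻¹' A : Set X) := by
  rw [(hA.2.1.isClosed.preimage continuous_subtype_val).isNowhereDense_iff,
    interior_eq_empty_iff_dense_compl, Subtype.dense_iff, ← preimage_compl,
    Subtype.image_preimage_coe]
  exact hX.subset_closure_diff hXc hXconn hA hAX

end Continuum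

section Composant

variable {E : Type*} [MetricSpace E] {X : Set E} {p : E}

def composantAvoiding (X : Set E) (p : E) (U : Set X) : Set E :=
  ⋃₀ {A : Set E | IsSubcontinuum X A ∧ p ∈ A ∧ Disjoint (Subtype.val ⁻¹' A : Set X) U}

theorem IsIndecomposable.isNowhereDense_preimage_composantAvoiding (hXc : IsCompact X)
    (hXconn : IsConnected X) (hX : IsIndecomposable X) {U : Set X} (hU : IsOpen U)
    (hUne : U.Nonempty) :
    IsNowhereDense (Subtype.val ⁻¹' composantAvoiding X p U : Set X) := by
  rcases (composantAvoiding X p U).eq_empty_or_nonempty with hJ | hJ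
  · rw [hJ, preimage_empty]
    exact isNowhereDense_empty
  obtain ⟨A, hA, -⟩ := nonempty_sUnion.mp hJ
  have hC : IsSubcontinuum X (closure (composantAvoiding X p U)) :=
    isSubcontinuum_closure_sUnion hXc ⟨A, hA⟩ (fun A hA => hA.1) (fun A hA => hA.2.1)
  have hdisj : Disjoint (Subtype.val ⁻¹' closure (composantAvoiding X p U) : Set X) U := by
    have hJX : composantAvoiding X p U ⊆ X := sUnion_subset fun A hA => hA.1.1
    rw [← inter_eq_right.mpr hJX, ← Subtype.image_preimage_coe,
      ← IsEmbedding.subtypeVal.closure_eq_preimage_closure_image, composantAvoiding,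
      preimage_sUnion]
    exact (disjoint_iUnion₂_left.mpr fun A hA => hA.2.2).closure_left hU
  have hCX : closure (composantAvoiding X p U) ≠ X := fun h => by
    obtain ⟨z, hz⟩ := hUne
    exact disjoint_left.mp hdisj (h.ge z.2) hz
  exact (hX.isNowhereDense_preimage_val hXc hXconn hC hCX).mono (preimage_mono subset_closure)

theorem preimage_composant_subset_biUnion {𝒮 : Set (Set X)}
    (h𝒮 : IsTopologicalBasis 𝒮) :
    (Subtype.val ⁻¹' Composant X p : Set X) ⊆
      ⋃ U ∈ 𝒮, Subtype.val ⁻¹' composantAvoiding X p U := by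
  rintro x ⟨A, ⟨hA, hAX, hpA⟩, hxA⟩
  obtain ⟨q, hqX, hqA⟩ : ∃ q ∈ X, q ∉ A := not_subset.mp fun h => hAX (hA.1.antisymm h)
  obtain ⟨U, hU𝒮, -, hUA⟩ := h𝒮.exists_subset_of_mem_open (a := ⟨q, hqX⟩) hqA
    (hA.2.1.isClosed.preimage continuous_subtype_val).isOpen_compl
  exact mem_iUnion₂.mpr ⟨U, hU𝒮, A, ⟨hA, hpA, subset_compl_iff_disjoint_left.mp hUA⟩, hxA⟩

end Composant

theorem composant_proper_and_meager_general
    {E : Type*} [MetricSpace E] (X : Set E)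
    (hXc : IsCompact X) (hXconn : IsConnected X)
    (hX : IsIndecomposable X)
    (p : E) :
    Composant X p ⊂ X ∧ IsMeagre (Subtype.val ⁻¹' (Composant X p) : Set X) := by
  have : CompactSpace X := isCompact_iff_compactSpace.mp hXc
  have : Nonempty X := hXconn.nonempty.to_subtype
  obtain ⟨𝒮, h𝒮c, h𝒮empty, h𝒮⟩ := exists_countable_basis X
  have hnowhereDense (U) (hU : U ∈ 𝒮) :
      IsNowhereDense (Subtype.val ⁻¹' composantAvoiding X p U : Set X) :=
    hX.isNowhereDense_preimage_composantAvoiding hXc hXconn (h𝒮.isOpen hU)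
      (nonempty_iff_ne_empty.mpr (ne_of_mem_of_not_mem hU h𝒮empty))
  have hmeagre : IsMeagre (Subtype.val ⁻¹' (Composant X p) : Set X) :=
    (isMeagre_biUnion h𝒮c fun U hU => (hnowhereDense U hU).isMeagre).mono
      (preimage_composant_subset_biUnion h𝒮)
  refine ⟨ssubset_iff_subset_ne.mpr ⟨sUnion_subset fun A hA => hA.1.1, fun h => ?_⟩, hmeagre⟩
  rw [h, Subtype.coe_preimage_self] at hmeagre
  exact not_isMeagre_of_isOpen isOpen_univ univ_nonempty hmeagre

theorem composant_proper_and_meager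
    {E : Type*} [MetricSpace E] (X : Set E)
    (hXc : IsCompact X) (hXconn : IsConnected X)
    (hnd : X.Nontrivial) (hX : IsIndecomposable X)
    (p : E) (hp : p ∈ X) :
    Composant X p ⊂ X ∧ IsMeagre (Subtype.val ⁻¹' (Composant X p) : Set X) :=
  composant_proper_and_meager_general X hXc hXconn hX p
end

section
/- A nondegenerate indecomposable continuum has uncountably many pairwise disjoint composants. -/
open Set Metric

/-! Distinct composants of an indecomposable continuum `X` are disjoint, and each one is
covered by countably many proper subcontinua: the components of `p` in `X` minus a small ball
centred at a point of a countable dense set. If there were only countably many composants,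
`X` would be a countable union of proper subcontinua, so by the Baire category theorem one of
them would have nonempty interior in `X`. That is impossible: for a proper subcontinuum `A`,
the set `X \ A` is connected (a separation `P ∪ Q` of it would decompose `X` as
`(A ∪ P) ∪ (A ∪ Q)`), so `X = A ∪ closure (X \ A)`, and the second piece is proper as soon as
`A` has interior. -/

theorem IsClosed.connectedComponentIn {α : Type*} [TopologicalSpace α] {F : Set α}
    (hF : IsClosed F) (x : α) : IsClosed (connectedComponentIn F x) := by
  by_cases hx : x ∈ F
  · exact isClosed_of_closure_subset <|
      isPreconnected_connectedComponentIn.closure.subset_connectedComponentIn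
        (subset_closure (mem_connectedComponentIn hx))
        (closure_minimal (connectedComponentIn_subset F x) hF)
  · rw [connectedComponentIn_eq_empty hx]
    exact isClosed_empty

theorem IsPreconnected.union_inter_of_separation {α : Type*} [TopologicalSpace α]
    {X A U V : Set α} (hX : IsPreconnected X) (hA : IsPreconnected A) (hAc : IsClosed A)
    (hAX : A ⊆ X) (hU : IsOpen U) (hV : IsOpen V) (hcov : X \ A ⊆ U ∪ V)
    (hdis : (X \ A) ∩ (U ∩ V) = ∅) : IsPreconnected (A ∪ (X \ A) ∩ U) := by
  rw [isPreconnected_iff_subset_of_disjoint]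
  intro S T hS hT hST hdisST
  wlog hAS : A ⊆ S generalizing S T
  · have hAT : A ⊆ T :=
      (isPreconnected_iff_subset_of_disjoint.1 hA S T hS hT (subset_union_left.trans hST)
        (subset_empty_iff.1 <| hdisST ▸ inter_subset_inter_left _ subset_union_left)).resolve_left
        hAS
    exact (this T S hT hS (union_comm S T ▸ hST) (inter_comm S T ▸ hdisST) hAT).symm
  have hXcov : X ⊆ (S ∪ V) ∪ T ∩ U ∩ Aᶜ := by
    intro x hx
    by_cases hxA : x ∈ A
    · exact Or.inl (Or.inl (hAS hxA))
    rcases hcov ⟨hx, hxA⟩ with hxU | hxV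
    · rcases hST (Or.inr ⟨⟨hx, hxA⟩, hxU⟩) with hxS | hxT
      · exact Or.inl (Or.inl hxS)
      · exact Or.inr ⟨⟨hxT, hxU⟩, hxA⟩
    · exact Or.inl (Or.inr hxV)
  have hXdis : X ∩ ((S ∪ V) ∩ (T ∩ U ∩ Aᶜ)) = ∅ := by
    refine eq_empty_iff_forall_notMem.2 ?_
    rintro x ⟨hx, hxS | hxV, ⟨hxT, hxU⟩, hxA⟩
    · exact hdisST.subset ⟨Or.inr ⟨⟨hx, hxA⟩, hxU⟩, hxS, hxT⟩
    · exact hdis.subset ⟨⟨hx, hxA⟩, hxU, hxV⟩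
  rcases isPreconnected_iff_subset_of_disjoint.1 hX _ _ (hS.union hV)
    ((hT.inter hU).inter hAc.isOpen_compl) hXcov hXdis with hXS | hXT
  · left
    rintro y (hy | ⟨hyXA, hyU⟩)
    · exact hAS hy
    · exact (hXS hyXA.1).resolve_right fun hyV => hdis.subset ⟨hyXA, hyU, hyV⟩
  · right
    rintro y (hy | ⟨hyXA, -⟩)
    · exact absurd hy (hXT (hAX hy)).2
    · exact (hXT hyXA.1).1.1

section Continuum

variable {E : Type*} [MetricSpace E] {X A B : Set E}

theorem IsSubcontinuum.union (hA : IsSubcontinuum X A) (hB : IsSubcontinuum X B)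
    (hAB : (A ∩ B).Nonempty) : IsSubcontinuum X (A ∪ B) :=
  ⟨union_subset hA.1 hB.1, hA.2.1.union hB.2.1, IsConnected.union hAB hA.2.2 hB.2.2⟩

theorem IsIndecomposable.union_ne (hX : IsIndecomposable X) (hA : IsSubcontinuum X A)
    (hB : IsSubcontinuum X B) (hAX : A ≠ X) (hBX : B ≠ X) : A ∪ B ≠ X :=
  fun h => hX ⟨A, B, hA, hB, hAX, hBX, h⟩

theorem IsIndecomposable.composant_subset_of_nonempty_inter (hX : IsIndecomposable X)
    {p q : E} (h : (Composant X p ∩ Composant X q).Nonempty) :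
    Composant X p ⊆ Composant X q := by
  obtain ⟨x, ⟨A, ⟨hA, hAX, hpA⟩, hxA⟩, ⟨B, ⟨hB, hBX, hqB⟩, hxB⟩⟩ := h
  rintro y ⟨A', ⟨hA', hA'X, hpA'⟩, hyA'⟩
  have hA'A : IsSubcontinuum X (A' ∪ A) := hA'.union hA ⟨p, hpA', hpA⟩
  have hA'AX : A' ∪ A ≠ X := hX.union_ne hA' hA hA'X hAX
  exact ⟨A' ∪ A ∪ B, ⟨hA'A.union hB ⟨x, Or.inr hxA, hxB⟩, hX.union_ne hA'A hB hA'AX hBX,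
    Or.inr hqB⟩, Or.inl (Or.inl hyA')⟩

theorem IsIndecomposable.composant_eq_of_nonempty_inter (hX : IsIndecomposable X) {p q : E}
    (h : (Composant X p ∩ Composant X q).Nonempty) : Composant X p = Composant X q :=
  (hX.composant_subset_of_nonempty_inter h).antisymm
    (hX.composant_subset_of_nonempty_inter (inter_comm (Composant X p) _ ▸ h))

theorem mem_composant_self (hX : X.Nontrivial) {p : E} (hp : p ∈ X) : p ∈ Composant X p :=
  ⟨{p}, ⟨⟨singleton_subset_iff.2 hp, isCompact_singleton, isConnected_singleton⟩,
    fun h => (h ▸ hX).not_subsingleton subsingleton_singleton, rfl⟩, rfl⟩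

theorem IsSubcontinuum.union_inter_of_separation (hXc : IsCompact X) (hXconn : IsConnected X)
    (hA : IsSubcontinuum X A) {U V : Set E} (hU : IsOpen U) (hV : IsOpen V)
    (hcov : X \ A ⊆ U ∪ V) (hdis : (X \ A) ∩ (U ∩ V) = ∅) :
    IsSubcontinuum X (A ∪ (X \ A) ∩ U) := by
  obtain ⟨hAX, hAc, hAconn⟩ := hA
  have hsub : A ∪ (X \ A) ∩ U ⊆ X := union_subset hAX fun x hx => hx.1.1
  have heq : A ∪ (X \ A) ∩ U = X ∩ (A ∪ Vᶜ) := by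
    ext x
    have hcovx := @hcov x
    have hdisx : x ∉ (X \ A) ∩ (U ∩ V) := hdis ▸ notMem_empty x
    have hAXx := @hAX x
    simp only [mem_union, mem_inter_iff, mem_sdiff, mem_compl_iff] at hcovx hdisx ⊢
    tauto
  have hclosed : IsClosed (A ∪ (X \ A) ∩ U) :=
    heq ▸ hXc.isClosed.inter (hAc.isClosed.union hV.isClosed_compl)
  exact ⟨hsub, hXc.of_isClosed_subset hclosed hsub, hAconn.nonempty.mono subset_union_left,
    hXconn.isPreconnected.union_inter_of_separation hAconn.isPreconnected hAc.isClosed hAX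
      hU hV hcov hdis⟩

theorem IsIndecomposable.isPreconnected_diff_s8 (hXc : IsCompact X) (hXconn : IsConnected X)
    (hX : IsIndecomposable X) (hA : IsSubcontinuum X A) : IsPreconnected (X \ A) := by
  by_contra hsep
  simp only [IsPreconnected, not_forall, not_nonempty_iff_eq_empty] at hsep
  obtain ⟨U, V, hU, hV, hcov, ⟨u, huXA, huU⟩, ⟨v, hvXA, hvV⟩, hdis⟩ := hsep
  have hdis' : (X \ A) ∩ (V ∩ U) = ∅ := inter_comm U V ▸ hdis
  have notMem {x : E} (hxXA : x ∈ X \ A) {W W' : Set E} (hW' : x ∈ W')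
      (hWW' : (X \ A) ∩ (W ∩ W') = ∅) : x ∉ A ∪ (X \ A) ∩ W :=
    fun hx => hx.elim hxXA.2 fun hxW => hWW'.subset ⟨hxXA, hxW.2, hW'⟩
  refine hX ⟨_, _, hA.union_inter_of_separation hXc hXconn hU hV hcov hdis,
    hA.union_inter_of_separation hXc hXconn hV hU (union_comm U V ▸ hcov) hdis',
    fun h => notMem hvXA hvV hdis (h.ge hvXA.1),
    fun h => notMem huXA huU hdis' (h.ge huXA.1), ?_⟩
  refine subset_antisymm (union_subset (union_subset hA.1 fun x hx => hx.1.1)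
    (union_subset hA.1 fun x hx => hx.1.1)) fun x hx => ?_
  by_cases hxA : x ∈ A
  · exact Or.inl (Or.inl hxA)
  · exact (hcov ⟨hx, hxA⟩).imp (fun hxU => Or.inr ⟨⟨hx, hxA⟩, hxU⟩)
      fun hxV => Or.inr ⟨⟨hx, hxA⟩, hxV⟩

theorem IsIndecomposable.interior_preimage_eq_empty (hXc : IsCompact X)
    (hXconn : IsConnected X) (hX : IsIndecomposable X) (hA : IsSubcontinuum X A) (hAX : A ≠ X) :
    interior (Subtype.val ⁻¹' A : Set X) = ∅ := by
  obtain ⟨V, hV, hVeq⟩ :=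
    isOpen_induced_iff.1 (isOpen_interior (s := (Subtype.val ⁻¹' A : Set X)))
  have hVA {x : E} (hxX : x ∈ X) (hxV : x ∈ V) : x ∈ A :=
    interior_subset (s := (Subtype.val ⁻¹' A : Set X))
      (hVeq.le (show (⟨x, hxX⟩ : X) ∈ Subtype.val ⁻¹' V from hxV))
  rw [← hVeq, ← not_nonempty_iff_eq_empty]
  rintro ⟨⟨v, hvX⟩, hvV⟩
  have hXA : (X \ A).Nonempty := sdiff_nonempty.2 fun h => hAX (hA.1.antisymm h)
  have hBX : closure (X \ A) ⊆ X := closure_minimal sdiff_subset hXc.isClosed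
  have hB : IsSubcontinuum X (closure (X \ A)) :=
    ⟨hBX, hXc.of_isClosed_subset isClosed_closure hBX,
      IsConnected.closure ⟨hXA, hX.isPreconnected_diff_s8 hXc hXconn hA⟩⟩
  have hBne : closure (X \ A) ≠ X := by
    intro h
    obtain ⟨x, hxV, hxX, hxA⟩ := mem_closure_iff.1 (h.ge hvX) V hV hvV
    exact hxA (hVA hxX hxV)
  refine hX.union_ne hA hB hAX hBne (subset_antisymm (union_subset hA.1 hBX) fun x hx => ?_)
  by_cases hxA : x ∈ A
  · exact Or.inl hxA
  · exact Or.inr (subset_closure ⟨hx, hxA⟩)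

theorem IsIndecomposable.not_subset_sUnion_of_countable (hXc : IsCompact X)
    (hXconn : IsConnected X) (hX : IsIndecomposable X) {𝒦 : Set (Set E)} (h𝒦 : 𝒦.Countable)
    (hK : ∀ K ∈ 𝒦, IsSubcontinuum X K ∧ K ≠ X) : ¬ X ⊆ ⋃₀ 𝒦 := by
  intro hcov
  have : CompactSpace X := isCompact_iff_compactSpace.1 hXc
  have : Nonempty X := hXconn.nonempty.to_subtype
  have : Countable 𝒦 := h𝒦.to_subtype
  have hunion : ⋃ K : 𝒦, (Subtype.val ⁻¹' (K : Set E) : Set X) = univ := by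
    refine eq_univ_of_forall fun x => ?_
    obtain ⟨K, hK, hxK⟩ := hcov x.2
    exact mem_iUnion.2 ⟨⟨K, hK⟩, hxK⟩
  obtain ⟨⟨K, hK𝒦⟩, hint⟩ := nonempty_interior_of_iUnion_of_closed
    (fun K : 𝒦 => (hK K K.2).1.2.1.isClosed.preimage continuous_subtype_val) hunion
  rw [hX.interior_preimage_eq_empty hXc hXconn (hK K hK𝒦).1 (hK K hK𝒦).2] at hint
  exact not_nonempty_empty hint

theorem isSubcontinuum_connectedComponentIn_diff (hXc : IsCompact X) {O : Set E}
    (hO : IsOpen O) {p : E} (hp : p ∈ X \ O) :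
    IsSubcontinuum X (connectedComponentIn (X \ O) p) := by
  have hsub : connectedComponentIn (X \ O) p ⊆ X :=
    (connectedComponentIn_subset _ _).trans sdiff_subset
  exact ⟨hsub, hXc.of_isClosed_subset ((hXc.isClosed.sdiff hO).connectedComponentIn p) hsub,
    isConnected_connectedComponentIn_iff.2 hp⟩

theorem exists_ball_mem_subset_of_subset_closure {s c : Set E} (hc : s ⊆ closure c) {x : E}
    (hx : x ∈ s) {W : Set E} (hW : W ∈ nhds x) :
    ∃ d ∈ c, ∃ n : ℕ, x ∈ ball d (1 / (n + 1)) ∧ ball d (1 / (n + 1)) ⊆ W := by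
  obtain ⟨ε, hε, hxW⟩ := Metric.mem_nhds_iff.1 hW
  obtain ⟨n, hn⟩ := exists_nat_one_div_lt (half_pos hε)
  obtain ⟨d, hdc, hxd⟩ := Metric.mem_closure_iff.1 (hc hx) _ Nat.one_div_pos_of_nat
  refine ⟨d, hdc, n, hxd, (ball_subset_ball' ?_).trans hxW⟩
  rw [dist_comm]
  linarith

theorem composant_subset_sUnion_countable (hXc : IsCompact X) {p : E} (hp : p ∈ X) :
    ∃ 𝒦 : Set (Set E), 𝒦.Countable ∧ (∀ K ∈ 𝒦, IsSubcontinuum X K ∧ K ≠ X) ∧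
      Composant X p ⊆ ⋃₀ 𝒦 := by
  obtain ⟨c, hc, hdense⟩ := hXc.isSeparable
  let O : E × ℕ → Set E := fun i => ball i.1 (1 / (i.2 + 1))
  refine ⟨(fun i => connectedComponentIn (X \ O i) p) ''
      {i | i.1 ∈ c ∧ (O i ∩ X).Nonempty ∧ p ∉ O i},
    ((hc.prod countable_univ).mono fun i hi => mk_mem_prod hi.1 (mem_univ i.2)).image _, ?_, ?_⟩
  · rintro _ ⟨i, ⟨-, ⟨x, hxO, hxX⟩, hpO⟩, rfl⟩
    refine ⟨isSubcontinuum_connectedComponentIn_diff hXc isOpen_ball ⟨hp, hpO⟩, fun h => ?_⟩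
    exact (connectedComponentIn_subset _ _ (h.ge hxX)).2 hxO
  · rintro z ⟨A, ⟨hA, hAX, hpA⟩, hzA⟩
    obtain ⟨x, hxX, hxA⟩ := sdiff_nonempty.2 fun h => hAX (hA.1.antisymm h)
    obtain ⟨d, hdc, n, hxO, hOA⟩ := exists_ball_mem_subset_of_subset_closure hdense hxX
      (hA.2.1.isClosed.isOpen_compl.mem_nhds hxA)
    have hAO : A ⊆ X \ O (d, n) := fun a ha => ⟨hA.1 ha, fun haO => hOA haO ha⟩
    exact ⟨_, ⟨(d, n), ⟨hdc, ⟨x, hxO, hxX⟩, (hAO hpA).2⟩, rfl⟩,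
      hA.2.2.isPreconnected.subset_connectedComponentIn hpA hAO hzA⟩

end Continuum

theorem uncountably_many_disjoint_composants
    {E : Type*} [MetricSpace E] (X : Set E)
    (hXc : IsCompact X) (hXconn : IsConnected X)
    (hnd : X.Nontrivial) (hX : IsIndecomposable X) :
    ∃ S : Set (Set E),
      (∀ C ∈ S, ∃ p ∈ X, C = Composant X p) ∧
      (∀ C ∈ S, ∀ D ∈ S, C ≠ D → C ∩ D = ∅) ∧
      ¬ S.Countable := by
  refine ⟨Composant X '' X, fun C ⟨p, hp, hC⟩ => ⟨p, hp, hC.symm⟩, ?_, fun hS => ?_⟩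
  · rintro _ ⟨p, -, rfl⟩ _ ⟨q, -, rfl⟩ hpq
    exact not_nonempty_iff_eq_empty.1 fun h => hpq (hX.composant_eq_of_nonempty_inter h)
  have hcover : ∀ C ∈ Composant X '' X, ∃ 𝒦 : Set (Set E), 𝒦.Countable ∧
      (∀ K ∈ 𝒦, IsSubcontinuum X K ∧ K ≠ X) ∧ C ⊆ ⋃₀ 𝒦 := by
    rintro _ ⟨p, hp, rfl⟩
    exact composant_subset_sUnion_countable hXc hp
  choose! 𝒦 h𝒦 hK hC using hcover
  refine hX.not_subset_sUnion_of_countable hXc hXconn (hS.biUnion h𝒦) ?_ fun x hx => ?_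
  · intro K hK'
    obtain ⟨C, hCS, hKC⟩ := mem_iUnion₂.1 hK'
    exact hK C hCS K hKC
  · have hCx := mem_image_of_mem (Composant X) hx
    obtain ⟨K, hK𝒦, hxK⟩ := hC _ hCx (mem_composant_self hnd hx)
    exact ⟨K, mem_iUnion₂.2 ⟨_, hCx, hK𝒦⟩, hxK⟩
end

section
/- Let X be a nondegenerate indecomposable continuum, let p ∈ X, and let B be an open ball of positive radius around p. Then for any point q in a composant of X different from the composant of p, the connected component Q of X \ B containing q converges to X as the radius tends to 0; more precisely, for each open set V meeting X there is r > 0 such that for all radii less than r the component of X \ B_r(p) containing q meets V. -/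
open Set Metric

section Topology

variable {E : Type*} [TopologicalSpace E]

theorem IsCompact.connectedComponentIn {F : Set E} (hF : IsCompact F) (x : E) :
    IsCompact (connectedComponentIn F x) := by
  by_cases hx : x ∈ F
  · have : CompactSpace F := isCompact_iff_compactSpace.mp hF
    rw [connectedComponentIn_eq_image hx]
    exact isClosed_connectedComponent.isCompact.image continuous_subtype_val
  · rw [connectedComponentIn_eq_empty hx]
    exact isCompact_empty

theorem exists_isClopen_mem_disjoint_of_disjoint_connectedComponent
    [CompactSpace E] [T2Space E] {x : E} {B : Set E} (hB : IsClosed B)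
    (h : Disjoint (connectedComponent x) B) : ∃ U, IsClopen U ∧ x ∈ U ∧ Disjoint U B := by
  rw [connectedComponent_eq_iInter_isClopen, disjoint_iff_inter_eq_empty, inter_comm] at h
  obtain ⟨u, hu⟩ := hB.isCompact.elim_finite_subfamily_closed _ (fun U => U.2.1.isClosed) h
  refine ⟨⋂ U ∈ u, U.1, isClopen_biInter_finset fun U _ => U.2.1,
    mem_iInter₂.2 fun U _ => U.2.2, ?_⟩
  rwa [disjoint_iff_inter_eq_empty, inter_comm]

theorem connectedComponentIn_diff_inter_closure_nonempty [T2Space E]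
    {X W : Set E} (hXc : IsCompact X) (hX : IsPreconnected X) (hW : IsOpen W)
    (hWX : (W ∩ X).Nonempty) {q : E} (hq : q ∈ X \ W) :
    (connectedComponentIn (X \ W) q ∩ closure W).Nonempty := by
  by_contra hdisj
  rw [not_nonempty_iff_eq_empty, ← disjoint_iff_inter_eq_empty,
    connectedComponentIn_eq_image hq] at hdisj
  have : CompactSpace ↥(X \ W) := isCompact_iff_compactSpace.mp (hXc.diff hW)
  obtain ⟨U, hU, hqU, hUW⟩ := exists_isClopen_mem_disjoint_of_disjoint_connectedComponent
    (isClosed_closure.preimage continuous_subtype_val)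
    (by simpa only [preimage_image_eq _ Subtype.val_injective]
      using hdisj.preimage ((↑) : ↥(X \ W) → E))
  obtain ⟨O, hO, rfl⟩ := isOpen_induced_iff.mp hU.isOpen
  -- `K` is clopen in `X`: closed since compact, and equal to `X ∩ (O \ closure W)`.
  set K : Set E := (↑) '' ((↑) ⁻¹' O : Set ↥(X \ W))
  have hK : IsClosed K := (hU.isClosed.isCompact.image continuous_subtype_val).isClosed
  have hKO : K ⊆ O \ closure W := by
    rintro _ ⟨y, hyO, rfl⟩
    exact ⟨hyO, fun hyW => hUW.notMem_of_mem_left hyO hyW⟩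
  have hXO : X ∩ (O \ closure W) ⊆ K := fun x ⟨hxX, hxO, hxW⟩ =>
    ⟨⟨x, hxX, fun h => hxW (subset_closure h)⟩, hxO, rfl⟩
  obtain hXO' | hXK := isPreconnected_iff_subset_of_disjoint.mp hX _ _
    (hO.sdiff isClosed_closure) hK.isOpen_compl
    (fun x _ => (em (x ∈ K)).imp (hKO ·) id)
    (eq_empty_of_forall_notMem fun x ⟨hxX, hxO, hxK⟩ => hxK (hXO ⟨hxX, hxO⟩))
  · obtain ⟨w, hwW, hwX⟩ := hWX
    exact (hXO' hwX).2 (subset_closure hwW)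
  · exact hXK hq.1 ⟨⟨q, hq⟩, hqU, rfl⟩

end Topology

section Continua

variable {E : Type*} [MetricSpace E] {X : Set E}

theorem composant_inter_nonempty (hXc : IsCompact X) (hXconn : IsConnected X)
    (hnd : X.Nontrivial) {q : E} (hq : q ∈ X) {V : Set E} (hV : IsOpen V)
    (hVX : (V ∩ X).Nonempty) : (Composant X q ∩ V).Nonempty := by
  by_cases hqV : q ∈ V
  · refine ⟨q, ⟨{q}, ⟨⟨singleton_subset_iff.mpr hq, isCompact_singleton,
      isConnected_singleton⟩, fun h => ?_, rfl⟩, rfl⟩, hqV⟩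
    exact hnd.not_subsingleton (h ▸ subsingleton_singleton)
  obtain ⟨v, hvV, hvX⟩ := hVX
  obtain ⟨ε, hε, hεV⟩ := Metric.isOpen_iff.mp hV v hvV
  set W := ball v (ε / 2)
  have hWV : closure W ⊆ V :=
    closure_ball_subset_closedBall.trans ((closedBall_subset_ball (by linarith)).trans hεV)
  have hqW : q ∈ X \ W := ⟨hq, fun h => hqV (hWV (subset_closure h))⟩
  have hWX : (W ∩ X).Nonempty := ⟨v, mem_ball_self (by linarith), hvX⟩
  obtain ⟨x, hxA, hxW⟩ := connectedComponentIn_diff_inter_closure_nonempty hXc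
    hXconn.isPreconnected isOpen_ball hWX hqW
  have hAX : connectedComponentIn (X \ W) q ⊆ X \ W := connectedComponentIn_subset _ _
  refine ⟨x, ⟨_, ⟨⟨hAX.trans sdiff_subset, (hXc.diff isOpen_ball).connectedComponentIn q,
    isConnected_connectedComponentIn_iff.mpr hqW⟩, fun h => ?_,
    mem_connectedComponentIn hqW⟩, hxA⟩, hWV hxW⟩
  obtain ⟨w, hwW, hwX⟩ := hWX
  exact (hAX (h.ge hwX)).2 hwW

theorem composant_subset_of_mem_subcontinuum (hX : IsIndecomposable X) {A : Set E}
    (hA : IsSubcontinuum X A) (hAX : A ≠ X) {a b : E} (ha : a ∈ A) (hb : b ∈ A) :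
    Composant X a ⊆ Composant X b := by
  rintro x ⟨B, ⟨hB, hBX, haB⟩, hxB⟩
  refine ⟨A ∪ B, ⟨⟨union_subset hA.1 hB.1, hA.2.1.union hB.2.1,
    IsConnected.union ⟨a, ha, haB⟩ hA.2.2 hB.2.2⟩, fun h => hX ⟨A, B, hA, hB, hAX, hBX, h⟩,
    Or.inl hb⟩, Or.inr hxB⟩

theorem composant_eq_of_mem_composant (hX : IsIndecomposable X) {p q : E}
    (h : p ∈ Composant X q) : Composant X p = Composant X q := by
  obtain ⟨A, ⟨hA, hAX, hqA⟩, hpA⟩ := h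
  exact (composant_subset_of_mem_subcontinuum hX hA hAX hpA hqA).antisymm
    (composant_subset_of_mem_subcontinuum hX hA hAX hqA hpA)

end Continua

theorem component_outside_ball_converges_general
    {E : Type*} [MetricSpace E] (X : Set E)
    (hXc : IsCompact X) (hXconn : IsConnected X)
    (hnd : X.Nontrivial) (hX : IsIndecomposable X)
    (p q : E) (hq : q ∈ X)
    (hcomp : Composant X q ≠ Composant X p) :
    ∀ V : Set E, IsOpen V → (V ∩ X).Nonempty →
      ∃ r > (0:ℝ), ∀ s : ℝ, 0 < s → s < r →
        (connectedComponentIn (X \ Metric.ball p s) q ∩ V).Nonempty := by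
  intro V hV hVX
  obtain ⟨x, ⟨A, ⟨hA, hAX, hqA⟩, hxA⟩, hxV⟩ := composant_inter_nonempty hXc hXconn hnd hq hV hVX
  have hpA : p ∉ A := fun hpA =>
    hcomp (composant_eq_of_mem_composant hX ⟨A, ⟨hA, hAX, hqA⟩, hpA⟩).symm
  refine ⟨infDist p A, (hA.2.1.isClosed.notMem_iff_infDist_pos ⟨q, hqA⟩).mp hpA,
    fun s _ hs => ⟨x, ?_, hxV⟩⟩
  have hAs : A ⊆ X \ ball p s := fun a ha =>
    ⟨hA.1 ha, fun hpa => disjoint_ball_infDist.notMem_of_mem_left (ball_subset_ball hs.le hpa) ha⟩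
  exact hA.2.2.isPreconnected.subset_connectedComponentIn hqA hAs hxA

theorem component_outside_ball_converges
    {E : Type*} [MetricSpace E] (X : Set E)
    (hXc : IsCompact X) (hXconn : IsConnected X)
    (hnd : X.Nontrivial) (hX : IsIndecomposable X)
    (p q : E) (hp : p ∈ X) (hq : q ∈ X)
    (hcomp : Composant X q ≠ Composant X p) :
    ∀ V : Set E, IsOpen V → (V ∩ X).Nonempty →
      ∃ r > (0:ℝ), ∀ s : ℝ, 0 < s → s < r →
        (connectedComponentIn (X \ Metric.ball p s) q ∩ V).Nonempty :=
  component_outside_ball_converges_general X hXc hXconn hnd hX p q hq hcomp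
end

section
/- Let U be a simply connected plane domain, A a generalized crosscut of U with crosscut neighborhoods V₁ and V₂ (the two components of U \ A), and shadows S_i = ∂V_i ∩ ∂U for i = 1, 2. Then S₁ ∪ S₂ = ∂U. -/
/-!
An open arc is homeomorphic to an interval of `ℝ`, and no nonempty open subset of a surface
injects continuously into `ℝ`: a ball stays connected when a point is removed, whereas an
interval does not. Hence the arc `A` has empty interior, the open set `U = V₁ ∪ A ∪ V₂` lies in
the closure of `V₁ ∪ V₂`, and every boundary point of `U` is a limit of `V₁` or of `V₂`; lying
outside the open set `U`, it is not interior to either.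
-/

abbrev Sphere2 : Type := Metric.sphere (0 : EuclideanSpace ℝ (Fin 3)) 1

/-- An open arc: a homeomorphic image of the open unit interval `(0,1)`. -/
def IsOpenArc (A : Set Sphere2) : Prop :=
  Nonempty ((Set.Ioo (0:ℝ) 1) ≃ₜ A)

open Set Metric

theorem not_injOn_of_isPreconnected_diff_singleton {X α : Type*} [TopologicalSpace X]
    [LinearOrder α] [DenselyOrdered α] [TopologicalSpace α] [OrderClosedTopology α]
    {s : Set X} (hs : IsPreconnected s) (hs' : ∀ x ∈ s, IsPreconnected (s \ {x}))
    (hnt : s.Nontrivial) {f : X → α} (hf : ContinuousOn f s) : ¬InjOn f s := by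
  intro hinj
  obtain ⟨a, ha, c, hc, hac⟩ : ∃ a ∈ s, ∃ c ∈ s, f a < f c := by
    obtain ⟨x, hx, y, hy, hxy⟩ := hnt
    rcases (hinj.ne hx hy hxy).lt_or_gt with h | h
    exacts [⟨x, hx, y, hy, h⟩, ⟨y, hy, x, hx, h⟩]
  obtain ⟨v, hav, hvc⟩ := exists_between hac
  obtain ⟨b, hb, rfl⟩ := hs.intermediate_value ha hc hf ⟨hav.le, hvc.le⟩
  have hab : a ≠ b := fun h => hav.ne (congrArg f h)
  have hcb : c ≠ b := fun h => hvc.ne' (congrArg f h)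
  obtain ⟨y, ⟨hy, hyb⟩, hfy⟩ := (hs' b hb).intermediate_value ⟨ha, hab⟩ ⟨hc, hcb⟩
    (hf.mono sdiff_subset) ⟨hav.le, hvc.le⟩
  exact hyb (hinj hy hb hfy)

section NormedSpace

variable {E : Type*} [NormedAddCommGroup E] [NormedSpace ℝ E]

theorem Metric.isPreconnected_ball_diff_singleton (hE : 1 < Module.rank ℝ E) (c x : E)
    {r : ℝ} (hr : 0 < r) : IsPreconnected (ball c r \ {x}) := by
  set φ := OpenPartialHomeomorph.univBall c r
  have hφ : ball c r \ {x} = φ '' (φ ⁻¹' {x})ᶜ := by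
    rw [image_compl_preimage, ← image_univ, ← OpenPartialHomeomorph.univBall_source c r,
      φ.image_source_eq_target, OpenPartialHomeomorph.univBall_target c hr]
  have hinj : Function.Injective φ :=
    injOn_univ.mp (OpenPartialHomeomorph.univBall_source c r ▸ φ.injOn)
  have hcont : Continuous φ :=
    continuousOn_univ.mp (OpenPartialHomeomorph.univBall_source c r ▸ φ.continuousOn)
  have hcount : (φ ⁻¹' {x}).Countable := (subsingleton_singleton.preimage hinj).countable
  rw [hφ]
  exact ((hcount.isConnected_compl_of_one_lt_rank hE).image _ hcont.continuousOn).isPreconnected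

theorem ChartedSpace.not_injOn_of_isOpen {M α : Type*} [TopologicalSpace M] [ChartedSpace E M]
    [LinearOrder α] [DenselyOrdered α] [TopologicalSpace α] [OrderClosedTopology α]
    (hE : 1 < Module.rank ℝ E) {W : Set M} (hW : IsOpen W) (hne : W.Nonempty) {f : M → α}
    (hf : ContinuousOn f W) : ¬InjOn f W := by
  obtain ⟨a, ha⟩ := hne
  set φ := chartAt E a
  have ha' : a ∈ φ.source := mem_chart_source E a
  obtain ⟨r, hr, hball⟩ := Metric.isOpen_iff.mp (φ.isOpen_inter_preimage_symm hW) (φ a)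
    ⟨φ.map_source ha', by simpa only [mem_preimage, φ.left_inv ha'] using ha⟩
  have htarget : ball (φ a) r ⊆ φ.target := fun p hp => (hball hp).1
  have hmaps : MapsTo φ.symm (ball (φ a) r) W := fun p hp => (hball hp).2
  have : Nontrivial E := rank_pos_iff_nontrivial.mp (zero_lt_one.trans hE)
  intro hinj
  exact not_injOn_of_isPreconnected_diff_singleton isPreconnected_ball
    (fun x _ => isPreconnected_ball_diff_singleton hE _ x hr)
    (infinite_of_mem_nhds _ (ball_mem_nhds _ hr)).nontrivial
    (hf.comp (φ.continuousOn_symm.mono htarget) hmaps)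
    (hinj.comp (φ.symm.injOn.mono htarget) hmaps)

end NormedSpace

theorem IsOpenArc.interior_eq_empty {A : Set Sphere2} (hA : IsOpenArc A) : interior A = ∅ := by
  classical
  obtain ⟨e⟩ := hA
  set f : Sphere2 → ℝ := fun x => if h : x ∈ A then (e.symm ⟨x, h⟩ : ℝ) else 0
  have hrestrict : A.domRestrict f = fun x => (e.symm x : ℝ) := funext fun x => dif_pos x.2
  have hf : ContinuousOn f A := by
    rw [continuousOn_iff_continuous_domRestrict, hrestrict]
    exact continuous_subtype_val.comp e.symm.continuous
  have hinj : InjOn f A := by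
    rw [injOn_iff_injective, hrestrict]
    exact Subtype.val_injective.comp e.symm.injective
  by_contra hne
  exact ChartedSpace.not_injOn_of_isOpen (E := EuclideanSpace ℝ (Fin 2))
    (Module.one_lt_rank_of_one_lt_finrank (by simp)) isOpen_interior
    (nonempty_iff_ne_empty.mpr hne) (hf.mono interior_subset) (hinj.mono interior_subset)

section Topology

variable {X : Type*} [TopologicalSpace X]

theorem IsOpen.subset_closure_of_subset_union {U A B : Set X} (hU : IsOpen U)
    (hUAB : U ⊆ A ∪ B) (hA : interior A = ∅) : U ⊆ closure B := by
  have hdiff : U \ closure B ⊆ interior A :=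
    interior_maximal (fun x hx => (hUAB hx.1).resolve_right fun hb => hx.2 (subset_closure hb))
      (hU.sdiff isClosed_closure)
  intro x hx
  by_contra hxB
  exact hA.subset (hdiff ⟨hx, hxB⟩)

theorem IsOpen.closure_inter_frontier_subset_frontier {U V : Set X} (hU : IsOpen U)
    (hVU : V ⊆ U) : closure V ∩ frontier U ⊆ frontier V := by
  rintro x ⟨hxV, hxU⟩
  rw [hU.frontier_eq] at hxU
  exact ⟨hxV, fun hx => hxU.2 (hVU (interior_subset hx))⟩

end Topology

theorem shadows_union_eq_boundary_general
    (U : Set Sphere2) (hUo : IsOpen U)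
    (A : Set Sphere2) (hA : IsOpenArc A)
    (V₁ V₂ : Set Sphere2)
    (hcut : U = V₁ ∪ A ∪ V₂) :
    (frontier V₁ ∩ frontier U) ∪ (frontier V₂ ∩ frontier U) = frontier U := by
  have hV₁ : V₁ ⊆ U := hcut ▸ subset_union_left.trans subset_union_left
  have hV₂ : V₂ ⊆ U := hcut ▸ subset_union_right
  have hdense : U ⊆ closure (V₁ ∪ V₂) :=
    hUo.subset_closure_of_subset_union (hcut.trans (by rw [union_assoc, union_left_comm])).subset
      hA.interior_eq_empty
  refine (union_subset inter_subset_right inter_subset_right).antisymm fun x hx => ?_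
  have hx' : x ∈ closure V₁ ∪ closure V₂ := by
    rw [← closure_union]
    exact closure_minimal hdense isClosed_closure (frontier_subset_closure hx)
  rcases hx' with h | h
  · exact Or.inl ⟨hUo.closure_inter_frontier_subset_frontier hV₁ ⟨h, hx⟩, hx⟩
  · exact Or.inr ⟨hUo.closure_inter_frontier_subset_frontier hV₂ ⟨h, hx⟩, hx⟩

theorem shadows_union_eq_boundary
    (U : Set Sphere2) (hUo : IsOpen U) (hUconn : IsConnected U)
    (hUsc : SimplyConnectedSpace U) (hUbd : (frontier U).Nontrivial)
    (A : Set Sphere2) (hAU : A ⊆ U) (hA : IsOpenArc A)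
    (hAend : closure A \ A ⊆ frontier U)
    (V₁ V₂ : Set Sphere2) (hne : V₁ ≠ V₂)
    (h₁ : ∃ x ∈ U \ A, V₁ = connectedComponentIn (U \ A) x)
    (h₂ : ∃ x ∈ U \ A, V₂ = connectedComponentIn (U \ A) x)
    (hcut : U = V₁ ∪ A ∪ V₂) :
    (frontier V₁ ∩ frontier U) ∪ (frontier V₂ ∩ frontier U) = frontier U :=
  shadows_union_eq_boundary_general U hUo A hA V₁ V₂ hcut
end
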